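/- arXiv:1511.07922 — 2 statements merged into one kernel-verified Lean document; each statement's English description precedes it below -/
import Mathlib

section
/- If T is a desingularized operator for L, then for every i ∈ ℕ the operator ∂^i T is also a desingularized operator for L. -/
open Polynomial

noncomputable section

/-- `Q_R(x)`, the field of rational functions over the fraction field `Q_R` of `R`,
realized as the fraction field of `R[x]`. -/
abbrev QX (R : Type) [CommRing R] [IsDomain R] := FractionRing (Polynomial R)

/-- Data of an Ore algebra `R[x][∂; σ, δ] ⊆ Q_R(x)[∂; σ, δ]`.
The ring `A` plays the role of `Q_R(x)[∂]`; `ι` embeds the coefficient field,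
`D` is the Ore variable `∂`, subject to the commutation rule `∂·p = σ(p)·∂ + δ(p)`,
and every element of `A` has a unique finite coefficient expansion `Σ ι(cᵢ)·∂^i`. -/
structure OreAlg (R : Type) [CommRing R] [IsDomain R] (A : Type) [Ring A] where
  σ : Polynomial R ≃+* Polynomial R
  σ_fix : ∀ r : R, σ (C r) = C r
  δ : Polynomial R → Polynomial R
  δ_add : ∀ f g, δ (f + g) = δ f + δ g
  δ_linear : ∀ (r : R) (f), δ (C r * f) = C r * δ f
  ι : QX R →+* A
  ι_inj : Function.Injective ι
  D : A
  comm_rule : ∀ p : Polynomial R,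
    D * ι (algebraMap (Polynomial R) (QX R) p)
      = ι (algebraMap (Polynomial R) (QX R) (σ p)) * D
        + ι (algebraMap (Polynomial R) (QX R) (δ p))
  δ_leibniz : ∀ f g, δ (f * g) = σ f * δ g + δ f * g
  coeff : A → ℕ → QX R
  coeff_inj : ∀ P Q : A, (∀ i, coeff P i = coeff Q i) → P = Q
  coeff_add : ∀ P Q i, coeff (P + Q) i = coeff P i + coeff Q i
  coeff_smul : ∀ (f : QX R) (P : A) (i), coeff (ι f * P) i = f * coeff P i
  coeff_bdd : ∀ P : A, ∃ N, ∀ i, N < i → coeff P i = 0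
  coeff_mk : ∀ (N : ℕ) (c : ℕ → QX R), (∀ i, N < i → c i = 0) →
    ∀ j, coeff (∑ i ∈ Finset.range (N + 1), ι (c i) * D ^ i) j = c j

namespace OreAlg

variable {R : Type} [CommRing R] [IsDomain R] {A : Type} [Ring A] (O : OreAlg R A)

/-- The embedding of `R[x]` into the Ore algebra. -/
def ιp (f : Polynomial R) : A := O.ι (algebraMap (Polynomial R) (QX R) f)

/-- The `i`-th `∂`-coefficient of `P` lies in `R[x]`. -/
def PolyCoeff (P : A) (i : ℕ) : Prop :=
  ∃ f : Polynomial R, O.coeff P i = algebraMap (Polynomial R) (QX R) f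

/-- `P` belongs to the subring `R[x][∂]` of `Q_R(x)[∂]`. -/
def InB (P : A) : Prop := ∀ i, O.PolyCoeff P i

/-- The order (degree in `∂`) of an operator. -/
def ord (P : A) : ℕ := sSup {i | O.coeff P i ≠ 0}

/-- The leading coefficient (with respect to `∂`), in `Q_R(x)`. -/
def lc (P : A) : QX R := O.coeff P (O.ord P)

/-- The contraction ideal `cont(L) = Q_R(x)[∂]·L ∩ R[x][∂]`. -/
def cont (L : A) : Set A := {P | O.InB P ∧ ∃ Q : A, P = Q * L}

/-- The `k`-th submodule `M_k(L) = {P ∈ cont(L) : deg_∂ P ≤ k}`. -/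
def M (L : A) (k : ℕ) : Set A := {P | P ∈ O.cont L ∧ O.ord P ≤ k}

/-- The `k`-th coefficient ideal `I_k = {[∂^k]P : P ∈ M_k} ∪ {0}` (as a set of
polynomials; `0` arises from `P = 0`). -/
def Icoeff (L : A) (k : ℕ) : Set (Polynomial R) :=
  {f | ∃ P ∈ O.M L k, O.coeff P k = algebraMap (Polynomial R) (QX R) f}

end OreAlg

/-- `gcd(p, w) = 1` in `R[x]`: every common divisor is a unit. -/
def Copr {R : Type} [CommRing R] (p w : Polynomial R) : Prop :=
  ∀ d : Polynomial R, d ∣ p → d ∣ w → IsUnit d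

namespace OreAlg

variable {R : Type} [CommRing R] [IsDomain R] {A : Type} [Ring A] (O : OreAlg R A)

/-- `P` is a `p`-removing operator for `L` over `R[x]`, of order `k`:
`P·L ∈ R[x][∂]` and `σ^{-k}(lc_∂(P·L)) = (w/(v·p))·lc_∂(L)` with `gcd(p, w) = 1`. -/
def IsRemoving (L : A) (p : Polynomial R) (k : ℕ) (P : A) : Prop :=
  O.ord P = k ∧ O.InB (P * L) ∧
  ∃ w v t l : Polynomial R, v ≠ 0 ∧ Copr p w ∧
    O.lc (P * L) = algebraMap (Polynomial R) (QX R) t ∧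
    O.lc L = algebraMap (Polynomial R) (QX R) l ∧
    (⇑O.σ.symm)^[k] t * (v * p) = w * l

/-- `p` is removable from `L` (at some order). -/
def Removable (L : A) (p : Polynomial R) : Prop :=
  ∃ k P, O.IsRemoving L p k P

/-- Factorization data for `lc_∂(L) = c·p₁^{e₁}⋯p_m^{e_m}`, with `c ∈ R` and the
`pᵢ ∈ R[x] \ R` irreducible and pairwise coprime; `L` has order `r > 0`. -/
def Factored (L : A) (r m : ℕ) (c : R) (p : Fin m → Polynomial R)
    (e : Fin m → ℕ) : Prop :=
  O.ord L = r ∧ 0 < r ∧ c ≠ 0 ∧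
  O.lc L = algebraMap (Polynomial R) (QX R) (C c * ∏ i, p i ^ e i) ∧
  (∀ i, Irreducible (p i) ∧ 0 < (p i).natDegree) ∧
  (∀ i j, i ≠ j → Copr (p i) (p j))

/-- `T` is a desingularized operator for `L`: `T ∈ cont(L)` and
`σ^{r-k}(lc_∂(T)) = (a/(b·∏ pᵢ^{kᵢ}))·lc_∂(L)` with `a, b ∈ R`, where each
`pᵢ^{dᵢ}` with `dᵢ > kᵢ` is non-removable from `L`. -/
def Desing (L : A) (r m : ℕ) (c : R) (p : Fin m → Polynomial R)
    (e : Fin m → ℕ) (T : A) : Prop :=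
  T ∈ O.cont L ∧ r ≤ O.ord T ∧
  ∃ (a b : R) (k : Fin m → ℕ) (t l : Polynomial R),
    b ≠ 0 ∧ (∀ i, k i ≤ e i) ∧
    O.lc T = algebraMap (Polynomial R) (QX R) t ∧
    O.lc L = algebraMap (Polynomial R) (QX R) l ∧
    (⇑O.σ.symm)^[O.ord T - r] t * (C b * ∏ i, p i ^ k i) = C a * l ∧
    (∀ i (d : ℕ), k i < d → ¬ O.Removable L (p i ^ d))

/-- The left ideal of `R[x][∂]` generated by a set `S ⊆ R[x][∂]`. -/
def LIdeal (S : Set A) : Set A :=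
  {P | ∃ (n : ℕ) (co s : Fin n → A), (∀ i, O.InB (co i)) ∧ (∀ i, s i ∈ S) ∧
    P = ∑ i, co i * s i}

/-- The constant `a ∈ R` viewed inside the Ore algebra. -/
def cst (a : R) : A := O.ιp (C a)

/-- The saturation `I : a^∞ = {P ∈ R[x][∂] : aⁱ·P ∈ I for some i}`. -/
def sat (I : Set A) (a : R) : Set A :=
  {P | O.InB P ∧ ∃ i : ℕ, O.cst a ^ i * P ∈ I}

end OreAlg

/-!
The commutation rule `∂·f = σ(f)·∂ + δ(f)` shows that left multiplication by `∂` keeps an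
operator in `R[x][∂]`, raises its order by one and replaces its leading coefficient `t` by
`σ(t)`. Hence `∂^i·T` lies in `cont(L)`, has order `ord T + i` and leading coefficient `σ^i(t)`,
so `σ^{-(ord T + i - r)}(σ^i(t)) = σ^{-(ord T - r)}(t)`: the defining relation of a
desingularized operator holds for `∂^i·T` with the same `a`, `b` and `kᵢ`.
-/

namespace OreAlg

variable {R : Type} [CommRing R] [IsDomain R] {A : Type} [Ring A] (O : OreAlg R A)

local notation "alg" => algebraMap (Polynomial R) (QX R)

lemma coeff_zero (i : ℕ) : O.coeff 0 i = 0 := by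
  simpa using O.coeff_add 0 0 i

lemma δ_zero : O.δ 0 = 0 := by
  simpa using O.δ_add 0 0

lemma ιp_zero : O.ιp 0 = 0 := by
  simp [ιp]

lemma ιp_add (f g : Polynomial R) : O.ιp (f + g) = O.ιp f + O.ιp g := by
  simp [ιp]

lemma ord_zero : O.ord 0 = 0 := by
  simp [ord, coeff_zero]

lemma bddAbove_coeff_ne_zero (P : A) : BddAbove {i | O.coeff P i ≠ 0} := by
  obtain ⟨N, hN⟩ := O.coeff_bdd P
  exact ⟨N, fun j hj => not_lt.mp fun hNj => hj (hN j hNj)⟩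

lemma coeff_eq_zero_of_ord_lt {P : A} {j : ℕ} (hj : O.ord P < j) : O.coeff P j = 0 := by
  by_contra hne
  exact not_le.mpr hj (le_csSup (O.bddAbove_coeff_ne_zero P) hne)

lemma coeff_ord_ne_zero {P : A} (hP : P ≠ 0) : O.coeff P (O.ord P) ≠ 0 := by
  have hne : {i | O.coeff P i ≠ 0}.Nonempty := by
    by_contra h
    refine hP (O.coeff_inj P 0 fun i => ?_)
    rw [coeff_zero]
    by_contra hi
    exact h ⟨i, hi⟩
  exact Nat.sSup_mem hne (O.bddAbove_coeff_ne_zero P)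

lemma ord_eq_of_coeff {P : A} {n : ℕ} (hn : O.coeff P n ≠ 0)
    (h : ∀ j, n < j → O.coeff P j = 0) : O.ord P = n :=
  le_antisymm (csSup_le ⟨n, hn⟩ fun j hj => not_lt.mp fun hnj => hj (h j hnj))
    (le_csSup (O.bddAbove_coeff_ne_zero P) hn)

lemma eq_sum_coeff (P : A) :
    P = ∑ i ∈ Finset.range (O.ord P + 1), O.ι (O.coeff P i) * O.D ^ i :=
  O.coeff_inj _ _ fun j =>
    (O.coeff_mk _ (O.coeff P) (fun _ => O.coeff_eq_zero_of_ord_lt) j).symm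

section
variable {O}

lemma InB.exists_coeff {P : A} (hP : O.InB P) :
    ∃ f : ℕ → Polynomial R, (∀ i, O.coeff P i = alg (f i)) ∧ ∀ i, O.ord P < i → f i = 0 := by
  choose f hf using hP
  refine ⟨f, hf, fun i hi => IsFractionRing.injective (Polynomial R) (QX R) ?_⟩
  rw [← hf, O.coeff_eq_zero_of_ord_lt hi, map_zero]

end

/-- The `∂`-coefficients of `∂·P` when `f` lists those of `P`. -/
def coeffDMul (f : ℕ → Polynomial R) : ℕ → Polynomial R
  | 0 => O.δ (f 0)
  | j + 1 => O.σ (f j) + O.δ (f (j + 1))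

lemma D_mul_eq_sum {P : A} {f : ℕ → Polynomial R} (hf : ∀ i, O.coeff P i = alg (f i))
    (hN : ∀ i, O.ord P < i → f i = 0) :
    O.D * P = ∑ j ∈ Finset.range (O.ord P + 2), O.ιp (O.coeffDMul f j) * O.D ^ j := by
  set n := O.ord P
  have hP : P = ∑ i ∈ Finset.range (n + 1), O.ιp (f i) * O.D ^ i := by
    have h := O.eq_sum_coeff P
    simp only [hf] at h
    exact h
  have hδ : ∑ i ∈ Finset.range (n + 1), O.ιp (O.δ (f i)) * O.D ^ i
      = O.ιp (O.δ (f 0)) + ∑ i ∈ Finset.range (n + 1), O.ιp (O.δ (f (i + 1))) * O.D ^ (i + 1) := by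
    rw [Finset.sum_range_succ', Finset.sum_range_succ, hN (n + 1) (by omega), δ_zero, ιp_zero,
      zero_mul, add_zero, pow_zero, mul_one, add_comm]
  calc O.D * P
      = ∑ i ∈ Finset.range (n + 1),
          (O.ιp (O.σ (f i)) * O.D ^ (i + 1) + O.ιp (O.δ (f i)) * O.D ^ i) := by
        rw [hP, Finset.mul_sum]
        refine Finset.sum_congr rfl fun i _ => ?_
        rw [← mul_assoc, ιp, O.comm_rule, add_mul, mul_assoc, ← pow_succ']
        rfl
    _ = _ := by
        rw [Finset.sum_add_distrib, hδ, Finset.sum_range_succ' _ (n + 1)]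
        simp only [coeffDMul, ιp_add, add_mul, Finset.sum_add_distrib, pow_zero, mul_one]
        abel

lemma coeff_D_mul {P : A} {f : ℕ → Polynomial R} (hf : ∀ i, O.coeff P i = alg (f i))
    (hN : ∀ i, O.ord P < i → f i = 0) (j : ℕ) :
    O.coeff (O.D * P) j = alg (O.coeffDMul f j) := by
  rw [O.D_mul_eq_sum hf hN]
  refine O.coeff_mk (O.ord P + 1) (fun j => alg (O.coeffDMul f j)) (fun j hj => ?_) j
  obtain ⟨i, rfl⟩ : ∃ i, j = i + 1 := ⟨j - 1, by omega⟩
  simp [coeffDMul, hN i (by omega), hN (i + 1) (by omega), δ_zero]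

section
variable {O}

lemma InB.D_mul {P : A} (hP : O.InB P) : O.InB (O.D * P) := by
  obtain ⟨f, hf, hN⟩ := hP.exists_coeff
  exact fun j => ⟨_, O.coeff_D_mul hf hN j⟩

lemma InB.D_pow_mul {P : A} (hP : O.InB P) (n : ℕ) : O.InB (O.D ^ n * P) := by
  induction n with
  | zero => simpa using hP
  | succ n ih => simpa only [pow_succ', mul_assoc] using ih.D_mul

end

lemma coeff_D_mul_ord_succ {P : A} (hP : O.InB P) {t : Polynomial R} (ht : O.lc P = alg t) :
    O.coeff (O.D * P) (O.ord P + 1) = alg (O.σ t) := by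
  obtain ⟨f, hf, hN⟩ := hP.exists_coeff
  have hft : f (O.ord P) = t := IsFractionRing.injective (Polynomial R) (QX R) (by
    rw [← hf, ← ht, lc])
  rw [O.coeff_D_mul hf hN, coeffDMul, hft, hN _ (by omega), δ_zero, add_zero]

lemma coeff_D_mul_of_ord_succ_lt {P : A} (hP : O.InB P) {j : ℕ} (hj : O.ord P + 1 < j) :
    O.coeff (O.D * P) j = 0 := by
  obtain ⟨f, hf, hN⟩ := hP.exists_coeff
  obtain ⟨i, rfl⟩ : ∃ i, j = i + 1 := ⟨j - 1, by omega⟩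
  rw [O.coeff_D_mul hf hN, coeffDMul, hN i (by omega), hN (i + 1) (by omega), map_zero,
    δ_zero, add_zero, map_zero]

lemma ord_D_mul {P : A} (hP : O.InB P) (hP0 : P ≠ 0) : O.ord (O.D * P) = O.ord P + 1 := by
  obtain ⟨t, ht⟩ := hP (O.ord P)
  have ht0 : t ≠ 0 := by
    rintro rfl
    exact O.coeff_ord_ne_zero hP0 (by rw [ht, map_zero])
  refine O.ord_eq_of_coeff ?_ fun j => O.coeff_D_mul_of_ord_succ_lt hP
  rw [O.coeff_D_mul_ord_succ hP ht]
  exact (map_ne_zero_iff _ (IsFractionRing.injective _ _)).mpr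
    ((map_ne_zero_iff _ O.σ.injective).mpr ht0)

lemma D_mul_ne_zero {P : A} (hP : O.InB P) (hP0 : P ≠ 0) : O.D * P ≠ 0 := by
  intro h
  have := O.ord_D_mul hP hP0
  rw [h, ord_zero] at this
  omega

lemma lc_D_mul {P : A} (hP : O.InB P) (hP0 : P ≠ 0) {t : Polynomial R} (ht : O.lc P = alg t) :
    O.lc (O.D * P) = alg (O.σ t) := by
  rw [lc, O.ord_D_mul hP hP0, O.coeff_D_mul_ord_succ hP ht]

lemma D_pow_mul_ne_zero {P : A} (hP : O.InB P) (hP0 : P ≠ 0) (n : ℕ) : O.D ^ n * P ≠ 0 := by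
  induction n with
  | zero => simpa using hP0
  | succ n ih => simpa only [pow_succ', mul_assoc] using O.D_mul_ne_zero (hP.D_pow_mul n) ih

lemma ord_D_pow_mul {P : A} (hP : O.InB P) (hP0 : P ≠ 0) (n : ℕ) :
    O.ord (O.D ^ n * P) = O.ord P + n := by
  induction n with
  | zero => simp
  | succ n ih =>
    rw [pow_succ', mul_assoc, O.ord_D_mul (hP.D_pow_mul n) (O.D_pow_mul_ne_zero hP hP0 n), ih,
      add_assoc]

lemma lc_D_pow_mul {P : A} (hP : O.InB P) (hP0 : P ≠ 0) {t : Polynomial R}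
    (ht : O.lc P = alg t) (n : ℕ) : O.lc (O.D ^ n * P) = alg ((⇑O.σ)^[n] t) := by
  induction n with
  | zero => simpa using ht
  | succ n ih =>
    rw [pow_succ', mul_assoc, Function.iterate_succ_apply',
      O.lc_D_mul (hP.D_pow_mul n) (O.D_pow_mul_ne_zero hP hP0 n) ih]

end OreAlg

theorem desing_shift_general {R : Type} [CommRing R] [IsDomain R]
    {A : Type} [Ring A] (O : OreAlg R A)
    (L : A)
    (r m : ℕ) (c : R) (p : Fin m → Polynomial R) (e : Fin m → ℕ)
    (T : A) (hT : O.Desing L r m c p e T) :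
    ∀ i : ℕ, O.Desing L r m c p e (O.D ^ i * T) := by
  intro i
  rcases eq_or_ne T 0 with rfl | hT0
  · simpa using hT
  obtain ⟨⟨hTB, Q, hTQ⟩, hrT, a, b, k, t, l, hb, hke, hlcT, hlcL, heq, hnr⟩ := hT
  refine ⟨⟨hTB.D_pow_mul i, O.D ^ i * Q, by rw [hTQ, mul_assoc]⟩, ?_, a, b, k,
    (⇑O.σ)^[i] t, l, hb, hke, O.lc_D_pow_mul hTB hT0 hlcT i, hlcL, ?_, hnr⟩
  · rw [O.ord_D_pow_mul hTB hT0]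
    omega
  · rwa [O.ord_D_pow_mul hTB hT0, show O.ord T + i - r = O.ord T - r + i by omega,
      Function.iterate_add_apply, Function.LeftInverse.iterate O.σ.symm_apply_apply]

/-- if `T` is a desingularized operator for `L`, then so is `∂^i·T`
for every `i ∈ ℕ`. -/
theorem desing_shift {R : Type} [CommRing R] [IsDomain R]
    [IsPrincipalIdealRing R] {A : Type} [Ring A] (O : OreAlg R A)
    (L : A) (hL : L ≠ 0) (hLB : O.InB L)
    (r m : ℕ) (c : R) (p : Fin m → Polynomial R) (e : Fin m → ℕ)
    (hF : O.Factored L r m c p e)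
    (T : A) (hT : O.Desing L r m c p e T) :
    ∀ i : ℕ, O.Desing L r m c p e (O.D ^ i * T) :=
  desing_shift_general O L r m c p e T hT
end
end

section
/- Let p ∈ R[x] be primitive and a divisor of lc_∂(L). If there exists a p-removing operator for L over Q_R[x] of order k, then there exists a p-removing operator for L over R[x] of the same order k. -/
open Polynomial

noncomputable section

/-- `P` is a `p`-removing operator for `L` over `Q_R[x]`, of order `k`: all
coefficients of `P·L` lie in `Q_R[x]` (i.e. have constant denominators in `R`),
and `σ^{-k}(lc_∂(P·L)) = (w/(v·p))·lc_∂(L)` with `w, v ∈ Q_R[x]` (here cleared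
to `R[x]`) sharing no non-constant common factor of `p`. -/
def OreAlg.IsQRemoving {R : Type} [CommRing R] [IsDomain R] {A : Type} [Ring A]
    (O : OreAlg R A) (L : A) (p : Polynomial R) (k : ℕ) (P : A) : Prop :=
  O.ord P = k ∧
  (∀ i : ℕ, ∃ (f : Polynomial R) (b : R), b ≠ 0 ∧
    O.coeff (P * L) i
      = algebraMap (Polynomial R) (QX R) f / algebraMap (Polynomial R) (QX R) (C b)) ∧
  ∃ (w v t l : Polynomial R) (b : R), v ≠ 0 ∧ b ≠ 0 ∧
    (∀ d : Polynomial R, d ∣ p → d ∣ w → d.natDegree = 0) ∧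
    O.lc (P * L)
      = algebraMap (Polynomial R) (QX R) t / algebraMap (Polynomial R) (QX R) (C b) ∧
    O.lc L = algebraMap (Polynomial R) (QX R) l ∧
    (algebraMap (Polynomial R) (QX R) ((⇑O.σ.symm)^[k] t)
        / algebraMap (Polynomial R) (QX R) (C b))
      * algebraMap (Polynomial R) (QX R) (v * p)
      = algebraMap (Polynomial R) (QX R) (w * l)


/-!
Only finitely many coefficients of `P·L` are nonzero, each with a constant denominator, so
multiplying `P` on the left by a suitable nonzero constant `c ∈ R` puts `P·L` into `R[x][∂]`
without changing the order of `P`, and turns the leading-coefficient relation into one over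
`R[x]` with `w` replaced by `c·w`. Being primitive, `p` shares no nonunit factor with a
constant, and it shares only constants with `w`; hence it is coprime to `c·w`.
-/

namespace Polynomial

variable {R : Type} [CommRing R]

theorem IsPrimitive.isUnit_of_dvd_of_natDegree_eq_zero {p d : R[X]} (hp : p.IsPrimitive)
    (hdp : d ∣ p) (hd : d.natDegree = 0) : IsUnit d := by
  rw [eq_C_of_natDegree_eq_zero hd] at hdp ⊢
  exact isUnit_C.mpr (hp _ hdp)

theorem IsPrimitive.isRelPrime_C [NoZeroDivisors R] {p : R[X]} (hp : p.IsPrimitive) {a : R}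
    (ha : a ≠ 0) : IsRelPrime p (C a) := fun _ hdp hda =>
  hp.isUnit_of_dvd_of_natDegree_eq_zero hdp <|
    Nat.le_zero.mp ((natDegree_le_of_dvd hda (C_ne_zero.mpr ha)).trans_eq (natDegree_C a))

theorem IsPrimitive.isRelPrime_of_natDegree_eq_zero {p w : R[X]} (hp : p.IsPrimitive)
    (hw : ∀ d : R[X], d ∣ p → d ∣ w → d.natDegree = 0) : IsRelPrime p w :=
  fun d hdp hdw => hp.isUnit_of_dvd_of_natDegree_eq_zero hdp (hw d hdp hdw)

theorem IsPrimitive.isRelPrime_C_mul [NoZeroDivisors R] [DecompositionMonoid R[X]]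
    {p w : R[X]} (hp : p.IsPrimitive) {a : R} (ha : a ≠ 0)
    (hw : ∀ d : R[X], d ∣ p → d ∣ w → d.natDegree = 0) : IsRelPrime p (C a * w) :=
  (hp.isRelPrime_C ha).mul_right (hp.isRelPrime_of_natDegree_eq_zero hw)

end Polynomial

namespace OreAlg

variable {R : Type} [CommRing R] [IsDomain R] {A : Type} [Ring A] (O : OreAlg R A)

local notation "φ" => algebraMap (Polynomial R) (QX R)

theorem ord_ι_mul {f : QX R} (hf : f ≠ 0) (P : A) : O.ord (O.ι f * P) = O.ord P := by
  unfold ord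
  congr 1
  ext i
  simp [O.coeff_smul, hf]

theorem lc_ι_mul {f : QX R} (hf : f ≠ 0) (P : A) : O.lc (O.ι f * P) = f * O.lc P := by
  rw [lc, O.ord_ι_mul hf, O.coeff_smul, lc]

theorem σ_symm_C (r : R) : O.σ.symm (C r) = C r :=
  O.σ.symm_apply_eq.mpr (O.σ_fix r).symm

theorem σ_symm_iterate_C_mul (n : ℕ) (r : R) (t : Polynomial R) :
    (⇑O.σ.symm)^[n] (C r * t) = C r * (⇑O.σ.symm)^[n] t := by
  rw [iterate_map_mul, Function.iterate_fixed (O.σ_symm_C r)]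

variable {O} in
theorem InB.ιp_mul {P : A} (hP : O.InB P) (f : Polynomial R) :
    O.InB (O.ιp f * P) := fun i => by
  obtain ⟨g, hg⟩ := hP i
  exact ⟨f * g, by rw [ιp, O.coeff_smul, hg, map_mul]⟩

theorem exists_inB_ιp_C_mul {Q : A}
    (hQ : ∀ i, ∃ (f : Polynomial R) (b : R), b ≠ 0 ∧ O.coeff Q i = φ f / φ (C b)) :
    ∃ m : R, m ≠ 0 ∧ O.InB (O.ιp (C m) * Q) := by
  classical
  obtain ⟨N, hN⟩ := O.coeff_bdd Q
  choose f b hb hQ using hQ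
  refine ⟨∏ i ∈ Finset.range (N + 1), b i, Finset.prod_ne_zero_iff.mpr fun i _ => hb i, ?_⟩
  intro i
  rw [PolyCoeff, ιp, O.coeff_smul]
  rcases le_or_gt i N with hi | hi
  · obtain ⟨c, hc⟩ := Finset.dvd_prod_of_mem b (Finset.mem_range.mpr (Nat.lt_succ_of_le hi))
    have hbi : φ (C (b i)) ≠ 0 := by simpa using hb i
    refine ⟨C c * f i, ?_⟩
    rw [hQ, hc, C_mul, map_mul, map_mul]
    field_simp
  · exact ⟨0, by rw [hN i hi, map_zero, mul_zero]⟩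

end OreAlg

theorem removing_over_R_from_Q_general {R : Type} [CommRing R] [IsDomain R]
    [IsPrincipalIdealRing R] {A : Type} [Ring A] (O : OreAlg R A)
    (L : A)
    (p : Polynomial R) (hp : p.IsPrimitive)
    (k : ℕ) (hQ : ∃ P : A, O.IsQRemoving L p k P) :
    ∃ P : A, O.IsRemoving L p k P := by
  obtain ⟨P, hordP, hcoeffs, w, v, t, l, b, hv, hb, hpw, hlcPL, hlcL, hrel⟩ := hQ
  obtain ⟨m, hm, hinB⟩ := O.exists_inB_ιp_C_mul hcoeffs
  have hφ : ∀ a : R, a ≠ 0 → algebraMap (Polynomial R) (QX R) (C a) ≠ 0 := fun a ha => by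
    simpa using ha
  have hmul : O.ιp (C (b * m)) * P * L = O.ιp (C b) * (O.ιp (C m) * (P * L)) := by
    simp only [OreAlg.ιp, map_mul, mul_assoc]
  have hlc : O.lc (O.ιp (C (b * m)) * P * L)
      = algebraMap (Polynomial R) (QX R) (C m * t) := by
    rw [mul_assoc, OreAlg.ιp, O.lc_ι_mul (hφ _ (mul_ne_zero hb hm)), hlcPL, C_mul, map_mul,
      map_mul]
    field_simp [hφ b hb]
  have hrelR : (⇑O.σ.symm)^[k] t * (v * p) = C b * w * l := by
    rw [div_mul_eq_mul_div, div_eq_iff (hφ b hb), ← map_mul, ← map_mul] at hrel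
    linear_combination IsFractionRing.injective (Polynomial R) (QX R) hrel
  refine ⟨O.ιp (C (b * m)) * P, ?_, ?_, C (b * m) * w, v, C m * t, l, hv,
    hp.isRelPrime_C_mul (mul_ne_zero hb hm) hpw, hlc, hlcL, ?_⟩
  · rw [OreAlg.ιp, O.ord_ι_mul (hφ _ (mul_ne_zero hb hm)), hordP]
  · exact hmul ▸ hinB.ιp_mul (C b)
  · rw [O.σ_symm_iterate_C_mul, mul_assoc, hrelR, C_mul]
    ring

/-- if `p ∈ R[x]` is primitive, divides `lc_∂(L)`, and admits a
`p`-removing operator for `L` over `Q_R[x]` of order `k`, then it admits a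
`p`-removing operator for `L` over `R[x]` of the same order `k`. -/
theorem removing_over_R_from_Q {R : Type} [CommRing R] [IsDomain R]
    [IsPrincipalIdealRing R] {A : Type} [Ring A] (O : OreAlg R A)
    (L : A) (hr : 0 < O.ord L) (hLB : O.InB L)
    (p : Polynomial R) (hp : p.IsPrimitive)
    (hdvd : ∃ l : Polynomial R, O.lc L = algebraMap (Polynomial R) (QX R) l ∧ p ∣ l)
    (k : ℕ) (hQ : ∃ P : A, O.IsQRemoving L p k P) :
    ∃ P : A, O.IsRemoving L p k P :=
  removing_over_R_from_Q_general O L p hp k hQ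
end
end
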